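/- Let V = Z_9 (the integers modulo 9) and let C = {(0+a, 1+a, 8+a, 5+a) : a ∈ Z_9} be the set of nine 4-cycles obtained by developing the 4-cycle (0,1,8,5) under Z_9. Then (V, C) is a 4-cycle system of order 9, i.e., the edge sets of these nine 4-cycles partition the edge set of the complete graph K_9, and moreover (V, C) is strictly 4-sparse. -/

import Mathlib

open Finset

/-- The edge set of the 4-cycle `(a, b, c, d)`: edges {a,b}, {b,c}, {c,d}, {d,a}. -/
def cycEdges {V : Type*} [DecidableEq V] (a b c d : V) : Finset (Sym2 V) :=
  {s(a, b), s(b, c), s(c, d), s(d, a)}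

/-- `E` is the edge set of a 4-cycle on four distinct vertices. -/
def IsFourCycle {V : Type*} [DecidableEq V] (E : Finset (Sym2 V)) : Prop :=
  ∃ a b c d : V, ([a, b, c, d] : List V).Nodup ∧ E = cycEdges a b c d

/-- The set of vertices covered by a set of edges. -/
def edgeVerts {V : Type*} [DecidableEq V] (E : Finset (Sym2 V)) : Finset V :=
  E.sup (Sym2.lift ⟨fun x y => ({x, y} : Finset V), fun x y => Finset.pair_comm x y⟩)

/-- A `(k, l)`-configuration: a set of `l` pairwise edge-disjoint 4-cycles whose
union contains exactly `k` vertices. -/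
def IsConfiguration {V : Type*} [DecidableEq V] (k l : ℕ)
    (D : Finset (Finset (Sym2 V))) : Prop :=
  D.card = l ∧ (∀ E ∈ D, IsFourCycle E) ∧
    (∀ E ∈ D, ∀ F ∈ D, E ≠ F → Disjoint E F) ∧
    (D.sup edgeVerts).card = k

/-- `C` is a 4-cycle system: a collection of 4-cycles whose edge sets partition
the edge set of the complete graph on `V`. -/
def IsFourCycleSystem {V : Type*} [DecidableEq V] (C : Finset (Finset (Sym2 V))) : Prop :=
  (∀ E ∈ C, IsFourCycle E) ∧ ∀ e : Sym2 V, ¬ e.IsDiag → ∃! E, E ∈ C ∧ e ∈ E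

/-- `C` is a 4-cycle packing: a set of pairwise edge-disjoint 4-cycles. -/
def IsFourCyclePacking {V : Type*} [DecidableEq V] (C : Finset (Finset (Sym2 V))) : Prop :=
  (∀ E ∈ C, IsFourCycle E) ∧ ∀ E ∈ C, ∀ F ∈ C, E ≠ F → Disjoint E F

/-- `C` is `r`-sparse: it contains no `(j+3, j)`-configuration for `2 ≤ j ≤ r`. -/
def RSparse {V : Type*} [DecidableEq V] (r : ℕ) (C : Finset (Finset (Sym2 V))) : Prop :=
  ∀ j, 2 ≤ j → j ≤ r → ∀ D ⊆ C, ¬ IsConfiguration (j + 3) j D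

/-- Two 4-cycles form a double-diamond: they are `(a,b,c,d)` and `(a,e,c,f)`,
sharing the diagonal {a,c}. -/
def IsDoubleDiamond {V : Type*} [DecidableEq V] (E F : Finset (Sym2 V)) : Prop :=
  ∃ a b c d e f : V, ([a, b, c, d, e, f] : List V).Nodup ∧
    E = cycEdges a b c d ∧ F = cycEdges a e c f

/-- `C` is D-avoiding: no two of its 4-cycles form a double-diamond. -/
def DAvoiding {V : Type*} [DecidableEq V] (C : Finset (Finset (Sym2 V))) : Prop :=
  ∀ E ∈ C, ∀ F ∈ C, ¬ IsDoubleDiamond E F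

/-- `C` is strictly `r`-sparse: `r`-sparse and D-avoiding. -/
def StrictlyRSparse {V : Type*} [DecidableEq V] (r : ℕ)
    (C : Finset (Finset (Sym2 V))) : Prop :=
  RSparse r C ∧ DAvoiding C

/-!
The base cycle `(0, 1, 8, 5)` has edge differences `1, -2, -3, 4`, which represent each pair `±d`
of nonzero residues mod 9 exactly once, so its nine translates partition the edges of `K_9`.
A double-diamond consists of two distinct cycles sharing a diagonal; the diagonals of the
translate by `a` are `s(a, a + 8)` and `s(a + 1, a + 5)`, of differences `±1` and `±4`, so a pair
is a diagonal of at most one translate. Sparseness is a finite check over the `2⁹` subsets.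
-/

section FourCycles

variable {V : Type*} [DecidableEq V]

def IsDiagonal (E : Finset (Sym2 V)) (x y : V) : Prop :=
  x ∈ edgeVerts E ∧ y ∈ edgeVerts E ∧ x ≠ y ∧ s(x, y) ∉ E

instance (E : Finset (Sym2 V)) (x y : V) : Decidable (IsDiagonal E x y) :=
  inferInstanceAs (Decidable (_ ∧ _ ∧ _ ∧ _))

lemma edgeVerts_cycEdges (a b c d : V) : edgeVerts (cycEdges a b c d) = {a, b, c, d} := by
  ext x
  simp only [edgeVerts, cycEdges, sup_insert, sup_singleton, Sym2.lift_mk, sup_eq_union,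
    mem_union, mem_insert, mem_singleton]
  tauto

lemma isDiagonal_cycEdges {a b c d : V} (h : [a, b, c, d].Nodup) :
    IsDiagonal (cycEdges a b c d) a c := by
  rw [IsDiagonal, edgeVerts_cycEdges]
  simp only [cycEdges, mem_insert, mem_singleton, Sym2.eq_iff]
  simp only [List.nodup_cons, List.mem_cons, List.not_mem_nil] at h
  tauto

namespace IsDoubleDiamond

variable {E F : Finset (Sym2 V)}

lemma ne (h : IsDoubleDiamond E F) : E ≠ F := by
  obtain ⟨a, b, c, d, e, f, hnd, rfl, rfl⟩ := h
  intro heq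
  have hab : s(a, b) ∈ cycEdges a e c f := heq ▸ by simp [cycEdges]
  simp only [cycEdges, mem_insert, mem_singleton, Sym2.eq_iff] at hab
  simp only [List.nodup_cons, List.mem_cons, List.not_mem_nil] at hnd
  tauto

lemma exists_isDiagonal (h : IsDoubleDiamond E F) :
    ∃ x y, IsDiagonal E x y ∧ IsDiagonal F x y := by
  obtain ⟨a, b, c, d, e, f, hnd, rfl, rfl⟩ := h
  refine ⟨a, c, isDiagonal_cycEdges ?_, isDiagonal_cycEdges ?_⟩ <;>
  · simp only [List.nodup_cons, List.mem_cons, List.not_mem_nil] at hnd ⊢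
    tauto

end IsDoubleDiamond

lemma dAvoiding_of_isDiagonal_unique {C : Finset (Finset (Sym2 V))}
    (h : ∀ E ∈ C, ∀ F ∈ C, ∀ x y, IsDiagonal E x y → IsDiagonal F x y → E = F) :
    DAvoiding C := by
  intro E hE F hF hEF
  obtain ⟨x, y, hxE, hxF⟩ := hEF.exists_isDiagonal
  exact hEF.ne (h E hE F hF x y hxE hxF)

lemma rSparse_of_card_sup_ne {r : ℕ} {C : Finset (Finset (Sym2 V))}
    (h : ∀ D ⊆ C, 2 ≤ #D → #D ≤ r → #(D.sup edgeVerts) ≠ #D + 3) : RSparse r C := by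
  rintro j h2 hr D hD ⟨rfl, -, -, hk⟩
  exact h D hD h2 hr hk

lemma isFourCycleSystem_image {ι : Type*} [Fintype ι] (f : ι → Finset (Sym2 V))
    (hcyc : ∀ i, IsFourCycle (f i)) (hcover : ∀ x y, x ≠ y → ∃! i, s(x, y) ∈ f i) :
    IsFourCycleSystem (univ.image f) := by
  refine ⟨by simpa using hcyc, fun e he => ?_⟩
  induction e using Sym2.ind with
  | _ x y =>
    obtain ⟨i, hi, huniq⟩ := hcover x y (by simpa using he)
    refine ⟨f i, ⟨mem_image_of_mem f (mem_univ i), hi⟩, ?_⟩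
    rintro _ ⟨hE, hxy⟩
    obtain ⟨j, -, rfl⟩ := mem_image.mp hE
    rw [huniq j hxy]

end FourCycles

def developedCycle (a : ZMod 9) : Finset (Sym2 (ZMod 9)) :=
  cycEdges (0 + a) (1 + a) (8 + a) (5 + a)

lemma developedCycle_isFourCycle (a : ZMod 9) : IsFourCycle (developedCycle a) :=
  ⟨_, _, _, _, by revert a; decide, rfl⟩

lemma existsUnique_mem_developedCycle :
    ∀ x y : ZMod 9, x ≠ y → ∃! a, s(x, y) ∈ developedCycle a := by
  unfold ExistsUnique
  decide

lemma eq_of_isDiagonal_developedCycle :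
    ∀ a b x y : ZMod 9, IsDiagonal (developedCycle a) x y → IsDiagonal (developedCycle b) x y →
      a = b := by
  decide

lemma dAvoiding_developedCycles : DAvoiding (univ.image developedCycle) := by
  refine dAvoiding_of_isDiagonal_unique ?_
  simp only [mem_image, mem_univ, true_and, forall_exists_index, forall_apply_eq_imp_iff]
  exact fun a b x y ha hb => congrArg developedCycle (eq_of_isDiagonal_developedCycle a b x y ha hb)

set_option maxRecDepth 10000 in
lemma rSparse_four_developedCycles : RSparse 4 (univ.image developedCycle) := by
  have hcheck : (univ.image developedCycle).powerset.filter
      (fun D => 2 ≤ #D ∧ #D ≤ 4 ∧ #(D.sup edgeVerts) = #D + 3) = ∅ := by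
    decide
  refine rSparse_of_card_sup_ne fun D hD h2 h4 hk => ?_
  exact filter_eq_empty_iff.mp hcheck (mem_powerset.mpr hD) ⟨h2, h4, hk⟩

/-- The nine 4-cycles obtained by developing `(0, 1, 8, 5)` under `Z_9` form a
4-cycle system of order 9 which is strictly 4-sparse. -/
theorem zmod_nine_system_strictly_four_sparse :
    IsFourCycleSystem
      ((Finset.univ : Finset (ZMod 9)).image fun a =>
        cycEdges (0 + a) (1 + a) (8 + a) (5 + a)) ∧
    StrictlyRSparse 4
      ((Finset.univ : Finset (ZMod 9)).image fun a =>
        cycEdges (0 + a) (1 + a) (8 + a) (5 + a)) :=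
  ⟨isFourCycleSystem_image developedCycle developedCycle_isFourCycle
      existsUnique_mem_developedCycle,
    rSparse_four_developedCycles, dAvoiding_developedCycles⟩
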